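/- Let P_n(t) = ∏_{j=0}^{n-1}(t - x_j) and suppose w : ℝ → (0,∞) is differentiable with P_n · w satisfying the Bernstein-type bound |(P_n w)'(t)| ≤ (Cn/a_n) · sup_s |P_n(s)w(s)| for all t ∈ ℝ, with sup_s |P_n(s)w(s)| attained and finite and P_n(x_n)w(x_n) ≠ 0. Then for each 0 ≤ j < n, C|x_n - x_j| ≥ a_n/n. -/

import Mathlib

/-! Since `P w` vanishes at `x j`, the mean value theorem bounds `|P (x n) w (x n)|` by
`C n / a * |P (x n) w (x n)| * |x n - x j|`; cancelling the nonzero factor gives the claim. -/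

theorem norm_le_mul_norm_sub_of_eq_zero {E : Type*} [NormedAddCommGroup E] [NormedSpace ℝ E]
    {f : ℝ → E} (hf : Differentiable ℝ f) {L : ℝ} (hL : ∀ t, ‖deriv f t‖ ≤ L) {y : ℝ}
    (hy : f y = 0) (x : ℝ) : ‖f x‖ ≤ L * ‖x - y‖ := by
  simpa [hy] using Convex.norm_image_sub_le_of_norm_deriv_le (fun t _ => hf t)
    (fun t _ => hL t) convex_univ (Set.mem_univ y) (Set.mem_univ x)

theorem stmt8_general (n : ℕ) (x : ℕ → ℝ) (w : ℝ → ℝ) (C a : ℝ)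
    (ha : 0 < a) (hw : Differentiable ℝ w)
    (P : ℝ → ℝ) (hP : ∀ t, P t = ∏ j ∈ Finset.range n, (t - x j))
    (hne : P (x n) * w (x n) ≠ 0)
    (hB : ∀ t, |deriv (fun s => P s * w s) t| ≤ C * n / a * |P (x n) * w (x n)|) :
    ∀ j < n, C * |x n - x j| ≥ a / n := by
  intro j hj
  have hPdiff : Differentiable ℝ P := by
    rw [funext hP]
    exact Differentiable.fun_finsetProd fun i _ => differentiable_id.sub_const (x i)
  have hroot : P (x j) * w (x j) = 0 := by
    rw [hP, Finset.prod_eq_zero (Finset.mem_range.mpr hj) (sub_self _), zero_mul]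
  have hM : 0 < |P (x n) * w (x n)| := abs_pos.mpr hne
  have hn : (0 : ℝ) < n := Nat.cast_pos.mpr (Nat.zero_lt_of_lt hj)
  have hmvt : |P (x n) * w (x n)| ≤ C * n / a * |P (x n) * w (x n)| * |x n - x j| :=
    norm_le_mul_norm_sub_of_eq_zero (hPdiff.mul hw) hB hroot (x n)
  have hone : 1 ≤ C * n / a * |x n - x j| := by nlinarith
  rw [div_mul_eq_mul_div, le_div_iff₀ ha, one_mul] at hone
  rw [ge_iff_le, div_le_iff₀ hn]
  linarith

theorem stmt8 (n : ℕ) (hn : 1 ≤ n) (x : ℕ → ℝ) (w : ℝ → ℝ) (C a : ℝ)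
    (hC : 0 < C) (ha : 0 < a) (hw : Differentiable ℝ w) (hwpos : ∀ t, 0 < w t)
    (P : ℝ → ℝ) (hP : ∀ t, P t = ∏ j ∈ Finset.range n, (t - x j))
    (hsup : ∀ s, |P s * w s| ≤ |P (x n) * w (x n)|)
    (hne : P (x n) * w (x n) ≠ 0)
    (hB : ∀ t, |deriv (fun s => P s * w s) t| ≤ C * n / a * |P (x n) * w (x n)|) :
    ∀ j < n, C * |x n - x j| ≥ a / n :=
  stmt8_general n x w C a ha hw P hP hne hB
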